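/- arXiv:1407.2894 — 3 statements merged into one kernel-verified Lean document; each statement's English description precedes it below -/
import Mathlib

section
/- Every countable chain C that is not scattered satisfies sib(C) = 2^ℵ₀; equivalently, every countable chain C with sib(C) < 2^ℵ₀ is scattered. -/
/-!
Fix an embedding `ℚ ↪o C`. For `A ⊆ ℕ` let `L_A` be `ℚ` with the rational `n` replaced by a
block of `n + 2` points for each `n ∈ A`. Each `L_A` is countable, hence embeds into `ℚ` and so
into `C`, while `C ↪o ℚ ↪o L_A`; thus the image of `L_A` in `C` is a subset into which `C` embeds.
The finite blocks of `L_A` are its maximal covering chains, so `A` can be read off the order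
type of `L_A` and these `2^ℵ₀` subsets are pairwise non-isomorphic. The upper bound is the
number of subsets of `C`.
-/

universe u v

/-- `sib C` is the number of isomorphism classes of chains equimorphic to `C`,
computed as the number of order-isomorphism classes of subsets `S` of `C`
such that `C` order-embeds into `S`. -/
def sib (C : Type u) [LinearOrder C] : Cardinal.{u} :=
  Cardinal.mk (Quot fun S T : {S : Set C // Nonempty (C ↪o ↥S)} =>
    Nonempty (↥S.1 ≃o ↥T.1))

/-- A chain is scattered if `ℚ` does not embed into it. -/
def Scattered (C : Type u) [LinearOrder C] : Prop := IsEmpty (ℚ ↪o C)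

open Cardinal Order

section Sib

variable {C : Type u} [LinearOrder C]

theorem sib_le_two_power_mk : sib C ≤ 2 ^ #C :=
  mk_quot_le.trans <| (mk_subtype_le _).trans (mk_set (α := C)).le

theorem lift_mk_le_sib {ι : Type*} (X : ι → Type v) [∀ i, LinearOrder (X i)]
    (toC : ∀ i, X i ↪o C) (ofC : ∀ i, C ↪o X i) (hX : ∀ i j, (X i ≃o X j) → i = j) :
    lift.{u} #ι ≤ lift (sib C) := by
  let iso : ∀ i, X i ≃o Set.range (toC i) := fun i => (toC i).orderIso
  let rel : {S : Set C // Nonempty (C ↪o S)} → {S : Set C // Nonempty (C ↪o S)} → Prop :=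
    fun S T => Nonempty (S.1 ≃o T.1)
  have hrel : Equivalence rel :=
    ⟨fun _ => ⟨OrderIso.refl _⟩, fun ⟨e⟩ => ⟨e.symm⟩, fun ⟨e⟩ ⟨e'⟩ => ⟨e.trans e'⟩⟩
  refine lift_mk_le_lift_mk_of_injective (f := fun i =>
    Quot.mk rel ⟨Set.range (toC i), ⟨(ofC i).trans (iso i).toOrderEmbedding⟩⟩) ?_
  intro i j hij
  obtain ⟨e⟩ := hrel.eqvGen_iff.mp (Quot.eq.mp hij)
  exact hX i j (((iso i).trans e).trans (iso j).symm)

end Sib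

def HasMaxCovChain (X : Type*) [LinearOrder X] (n : ℕ) : Prop :=
  ∃ g : ℕ → X, IsSuccPrelimit (g 0) ∧ (∀ i < n, g i ⋖ g (i + 1)) ∧ IsPredPrelimit (g n)

theorem OrderIso.hasMaxCovChain {X Y : Type*} [LinearOrder X] [LinearOrder Y] (e : X ≃o Y)
    {n : ℕ} (h : HasMaxCovChain X n) : HasMaxCovChain Y n := by
  obtain ⟨g, h0, hg, hn⟩ := h
  refine ⟨e ∘ g, fun z hz => h0 (e.symm z) ?_, fun i hi => (apply_covBy_apply_iff e).2 (hg i hi),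
    fun z hz => hn (e.symm z) ?_⟩
  · simpa using (apply_covBy_apply_iff e.symm).2 hz
  · simpa using (apply_covBy_apply_iff e.symm).2 hz

def Blowup {ι : Type*} [LinearOrder ι] (f : ι → ℕ) : Type _ :=
  {p : ι ×ₗ ℕ // (ofLex p).2 < f (ofLex p).1}

namespace Blowup

variable {ι : Type*} [LinearOrder ι] {f : ι → ℕ}

instance : LinearOrder (Blowup f) :=
  inferInstanceAs (LinearOrder {p : ι ×ₗ ℕ // (ofLex p).2 < f (ofLex p).1})

instance [Countable ι] : Countable (Blowup f) :=
  inferInstanceAs (Countable {p : ι × ℕ // p.2 < f p.1})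

def mk (q : ι) (k : ℕ) (h : k < f q) : Blowup f := ⟨toLex (q, k), h⟩

def pt (x : Blowup f) : ι := (ofLex x.1).1

def idx (x : Blowup f) : ℕ := (ofLex x.1).2

@[simp] theorem pt_mk (q : ι) (k : ℕ) (h : k < f q) : pt (mk q k h) = q := rfl

@[simp] theorem idx_mk (q : ι) (k : ℕ) (h : k < f q) : idx (mk q k h) = k := rfl

theorem idx_lt (x : Blowup f) : idx x < f (pt x) := x.2

theorem lt_iff {x y : Blowup f} : x < y ↔ pt x < pt y ∨ pt x = pt y ∧ idx x < idx y :=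
  Prod.Lex.lt_iff (x := x.1) (y := y.1)

variable [DenselyOrdered ι]

theorem covBy_iff (hf : ∀ q, 0 < f q) {x y : Blowup f} :
    x ⋖ y ↔ pt x = pt y ∧ idx y = idx x + 1 := by
  constructor
  · intro hxy
    rcases lt_iff.1 hxy.1 with hq | ⟨hq, hk⟩
    · obtain ⟨r, hxr, hry⟩ := exists_between hq
      exact absurd (lt_iff.2 (Or.inl (by simpa using hry))) <|
        hxy.2 (c := mk r 0 (hf r)) (lt_iff.2 (Or.inl (by simpa using hxr)))
    · refine ⟨hq, le_antisymm (not_lt.1 fun hlt => ?_) hk⟩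
      have hz : idx x + 1 < f (pt x) := hq ▸ hlt.trans (idx_lt y)
      exact hxy.2 (c := mk (pt x) (idx x + 1) hz) (lt_iff.2 (Or.inr ⟨rfl, by simp⟩))
        (lt_iff.2 (Or.inr ⟨by simpa using hq, by simpa using hlt⟩))
  · rintro ⟨hq, hk⟩
    refine ⟨lt_iff.2 (Or.inr ⟨hq, by omega⟩), fun z hxz hzy => ?_⟩
    rcases lt_iff.1 hxz with h1 | ⟨e1, h1⟩ <;> rcases lt_iff.1 hzy with h2 | ⟨e2, h2⟩
    · exact (h1.trans h2).ne hq
    · exact h1.ne (hq.trans e2.symm)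
    · exact h2.ne (e1.symm.trans hq)
    · omega

theorem isSuccPrelimit_iff (hf : ∀ q, 0 < f q) {x : Blowup f} :
    IsSuccPrelimit x ↔ idx x = 0 := by
  refine ⟨fun hx => by_contra fun h0 => hx (mk (pt x) (idx x - 1) ?_) ?_, fun h0 z hz => ?_⟩
  · exact (Nat.sub_le _ _).trans_lt (idx_lt x)
  · exact (covBy_iff hf).2 ⟨rfl, by simp; omega⟩
  · have := ((covBy_iff hf).1 hz).2
    omega

theorem isPredPrelimit_iff (hf : ∀ q, 0 < f q) {x : Blowup f} :
    IsPredPrelimit x ↔ idx x + 1 = f (pt x) := by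
  refine ⟨fun hx => by_contra fun hlt => hx (mk (pt x) (idx x + 1) ?_) ?_, fun hl z hz => ?_⟩
  · exact lt_of_le_of_ne (idx_lt x) hlt
  · exact (covBy_iff hf).2 ⟨rfl, rfl⟩
  · obtain ⟨hq, hk⟩ := (covBy_iff hf).1 hz
    have := idx_lt z
    rw [← hq] at this
    omega

theorem hasMaxCovChain_iff (hf : ∀ q, 0 < f q) {n : ℕ} :
    HasMaxCovChain (Blowup f) n ↔ ∃ q, f q = n + 1 := by
  constructor
  · rintro ⟨g, h0, hg, hn⟩
    have hblock : ∀ i ≤ n, pt (g i) = pt (g 0) ∧ idx (g i) = i := by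
      intro i
      induction i with
      | zero => exact fun _ => ⟨rfl, (isSuccPrelimit_iff hf).1 h0⟩
      | succ i ih =>
        intro hi
        obtain ⟨hq, hk⟩ := (covBy_iff hf).1 (hg i (by omega))
        obtain ⟨hq', hk'⟩ := ih (by omega)
        exact ⟨hq.symm.trans hq', by omega⟩
    obtain ⟨hq, hk⟩ := hblock n le_rfl
    refine ⟨pt (g 0), ?_⟩
    rw [← hq, ← (isPredPrelimit_iff hf).1 hn, hk]
  · rintro ⟨q, hq⟩
    refine ⟨fun i => mk q (min i n) (by omega), ?_, fun i hi => ?_, ?_⟩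
    · simp [isSuccPrelimit_iff hf]
    · exact (covBy_iff hf).2 ⟨rfl, by simp; omega⟩
    · simp [isPredPrelimit_iff hf, hq]

def embedding (hf : ∀ q, 0 < f q) : ι ↪o Blowup f :=
  OrderEmbedding.ofStrictMono (fun q => mk q 0 (hf q)) fun _ _ h => lt_iff.2 (Or.inl h)

end Blowup

open Classical in
/-- Block lengths over `ℚ` coding `A ⊆ ℕ`: the rational `n` gets length `n + 2` when `n ∈ A`,
every other rational gets length `1`. -/
noncomputable def codeLen (A : Set ℕ) (q : ℚ) : ℕ :=
  if (⌊q⌋₊ : ℚ) = q ∧ ⌊q⌋₊ ∈ A then ⌊q⌋₊ + 2 else 1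

theorem codeLen_pos (A : Set ℕ) (q : ℚ) : 0 < codeLen A q := by
  unfold codeLen
  split_ifs <;> omega

theorem exists_codeLen_eq_iff {A : Set ℕ} {n : ℕ} : (∃ q, codeLen A q = n + 2) ↔ n ∈ A := by
  refine ⟨fun ⟨q, hq⟩ => ?_, fun hn => ⟨n, by simp [codeLen, hn]⟩⟩
  unfold codeLen at hq
  split_ifs at hq with h
  · exact (by omega : ⌊q⌋₊ = n) ▸ h.2
  · omega

theorem eq_of_blowup_codeLen_orderIso {A B : Set ℕ}
    (e : Blowup (codeLen A) ≃o Blowup (codeLen B)) : A = B := by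
  ext n
  rw [← exists_codeLen_eq_iff, ← exists_codeLen_eq_iff,
    ← Blowup.hasMaxCovChain_iff (codeLen_pos A), ← Blowup.hasMaxCovChain_iff (codeLen_pos B)]
  exact ⟨e.hasMaxCovChain, e.symm.hasMaxCovChain⟩

theorem sib_eq_continuum_of_countable_not_scattered
    (C : Type u) [LinearOrder C] [Countable C] (h : ¬ Scattered C) :
    sib C = 2 ^ Cardinal.aleph0 := by
  obtain ⟨ratToC⟩ : Nonempty (ℚ ↪o C) := not_isEmpty_iff.mp h
  obtain ⟨toRat⟩ : Nonempty (C ↪o ℚ) := Order.embedding_from_countable_to_dense C ℚ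
  refine le_antisymm (sib_le_two_power_mk.trans (power_le_power_left two_ne_zero mk_le_aleph0)) ?_
  have := lift_mk_le_sib (C := C) (fun A : Set ℕ => Blowup (codeLen A))
    (fun A => (Order.embedding_from_countable_to_dense _ ℚ).some.trans ratToC)
    (fun A => toRat.trans (Blowup.embedding (codeLen_pos A)))
    (fun _ _ => eq_of_blowup_codeLen_orderIso)
  simpa using this
end

section
/- For every chain C, the following are equivalent: (i) neither ℤ·ω nor ℤ·ω* embeds into C; (ii) C can be partitioned into finitely many intervals I_0 < I_1 < ... < I_{n-1} (each element of I_j below each element of I_k when j < k) such that each I_j with the induced order is a surordinal or a reverse surordinal. -/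
/-!
If there were arbitrarily long chains `q₀ < q₁ < ⋯ < qₘ` with a copy of `ℤ` between consecutive
points, one could repeatedly pick a copy of `ℤ` together with a convex set, still containing
arbitrarily long chains, lying entirely above or entirely below it; infinitely many copies of one
kind then form `ℤ·ω` or `ℤ·ω*`. Hence such chains have bounded length in the absence of both.
If `[a, b]` and `[b, c]` both contain a decreasing and an increasing sequence, then `(a, c)`
contains a copy of `ℤ`, so chains of such pairs are bounded as well. The height of a point in
these chains is monotone, and its level sets contain no such pair, which is exactly what makes a
chain a surordinal or a reverse surordinal.

Conversely, by pigeonhole two rows of `ℤ·ω` or `ℤ·ω*` start in the same interval, which then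
contains the right half of the lower row and the left half of the upper one.
-/

universe u

/-- A chain is a surordinal if every final segment `{y | x ≤ y}` is well-ordered. -/
def IsSurordinal (C : Type u) [LinearOrder C] : Prop :=
  ∀ x : C, Set.WellFoundedOn {y : C | x ≤ y} (· < ·)

open Set

section

variable {X : Type*} [LinearOrder X]

def HasBothSeqs (a b : X) : Prop :=
  (∃ d : ℕ → X, StrictAnti d ∧ ∀ n, d n ∈ Icc a b) ∧
    ∃ e : ℕ → X, StrictMono e ∧ ∀ n, e n ∈ Icc a b

theorem HasBothSeqs.mono_right {a b c : X} (h : HasBothSeqs a b) (hbc : b ≤ c) :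
    HasBothSeqs a c :=
  have hsub := Icc_subset_Icc_right hbc
  ⟨h.1.imp fun _ hd => ⟨hd.1, fun n => hsub (hd.2 n)⟩,
    h.2.imp fun _ he => ⟨he.1, fun n => hsub (he.2 n)⟩⟩

theorem not_isSurordinal_iff :
    ¬ IsSurordinal X ↔ ∃ (x : X) (d : ℕ → X), StrictAnti d ∧ ∀ n, x ≤ d n := by
  simp only [IsSurordinal, show ∀ x : X, Set.WellFoundedOn {y | x ≤ y} (· < ·) ↔ _ from
    fun x => Set.isWF_iff_no_descending_seq]
  push Not
  rfl

theorem not_isSurordinal_orderDual_iff :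
    ¬ IsSurordinal Xᵒᵈ ↔ ∃ (x : X) (e : ℕ → X), StrictMono e ∧ ∀ n, e n ≤ x :=
  not_isSurordinal_iff.trans
    ⟨fun ⟨x, d, hd, hx⟩ => ⟨x, d, hd.dual_right, hx⟩,
      fun ⟨x, e, he, hx⟩ => ⟨x, e, he.dual_right, hx⟩⟩

theorem isSurordinal_or_orderDual_iff :
    IsSurordinal X ∨ IsSurordinal Xᵒᵈ ↔ ∀ a b : X, ¬ HasBothSeqs a b := by
  constructor
  · rintro (h | h) a b ⟨⟨d, hd, hdab⟩, e, he, heab⟩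
    · exact not_isSurordinal_iff.mpr ⟨a, d, hd, fun n => (hdab n).1⟩ h
    · exact not_isSurordinal_orderDual_iff.mpr ⟨b, e, he, fun n => (heab n).2⟩ h
  · intro h
    by_contra! hne
    obtain ⟨x, d, hd, hxd⟩ := not_isSurordinal_iff.mp hne.1
    obtain ⟨y, e, he, hey⟩ := not_isSurordinal_orderDual_iff.mp hne.2
    refine h (min x (e 0)) (max (d 0) y) ⟨⟨d, hd, fun n => ⟨?_, ?_⟩⟩, e, he, fun n => ⟨?_, ?_⟩⟩
    · exact (min_le_left _ _).trans (hxd n)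
    · exact (hd.antitone n.zero_le).trans (le_max_left _ _)
    · exact (min_le_right _ _).trans (he.monotone n.zero_le)
    · exact (hey n).trans (le_max_right _ _)

theorem Set.OrdConnected.isSurordinal_or_orderDual_iff {S : Set X} (hS : S.OrdConnected) :
    IsSurordinal S ∨ IsSurordinal Sᵒᵈ ↔ ∀ a ∈ S, ∀ b ∈ S, ¬ HasBothSeqs a b := by
  rw [_root_.isSurordinal_or_orderDual_iff, Subtype.forall]
  refine forall₂_congr fun a ha => ⟨fun h b hb => ?_, fun h b => h b b.2 ∘ ?_⟩
  · rintro ⟨⟨d, hd, hdab⟩, e, he, heab⟩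
    have hsub : Icc a b ⊆ S := hS.out ha hb
    exact h ⟨b, hb⟩ ⟨⟨fun n => ⟨d n, hsub (hdab n)⟩, fun _ _ hmn => hd hmn, hdab⟩,
      fun n => ⟨e n, hsub (heab n)⟩, fun _ _ hmn => he hmn, heab⟩
  · rintro ⟨⟨d, hd, hdab⟩, e, he, heab⟩
    exact ⟨⟨fun n => d n, fun _ _ hmn => hd hmn, hdab⟩, fun n => e n, fun _ _ hmn => he hmn, heab⟩

def HasIntCopy (a b : X) : Prop :=
  ∃ f : ℤ → X, StrictMono f ∧ ∀ k, f k ∈ Ioo a b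

theorem HasIntCopy.lt {a b : X} (h : HasIntCopy a b) : a < b :=
  let ⟨_, _, hf⟩ := h
  (hf 0).1.trans (hf 0).2

theorem exists_int_strictMono_of_forall_lt {d e : ℕ → X} (hd : StrictAnti d)
    (he : StrictMono e) (hde : ∀ m n, d m < e n) :
    ∃ f : ℤ → X, StrictMono f ∧ ∀ k, f k ∈ range d ∪ range e := by
  refine ⟨fun k => if 0 ≤ k then e k.toNat else d (-k - 1).toNat,
    strictMono_int_of_lt_succ fun k => ?_, fun k => ?_⟩
  · rcases lt_trichotomy k (-1) with hk | rfl | hk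
    · simp only [if_neg (by omega : ¬ 0 ≤ k), if_neg (by omega : ¬ 0 ≤ k + 1)]
      exact hd (by omega)
    · exact hde _ _
    · simp only [if_pos (by omega : 0 ≤ k), if_pos (by omega : 0 ≤ k + 1)]
      exact he (by omega)
  · dsimp only
    split_ifs
    exacts [Or.inr (mem_range_self _), Or.inl (mem_range_self _)]

/-- The decreasing sequence of the first pair, placed below the increasing sequence of the
second, is a copy of `ℤ`. -/
theorem HasBothSeqs.hasIntCopy {a b c : X} (hab : HasBothSeqs a b) (hbc : HasBothSeqs b c) :
    HasIntCopy a c := by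
  obtain ⟨⟨d, hd, hdab⟩, -⟩ := hab
  obtain ⟨-, e, he, hebc⟩ := hbc
  have hd_lt_b : ∀ m, d (m + 1) < b := fun m => (hd m.succ_pos).trans_le (hdab 0).2
  have hb_lt_e : ∀ n, b < e (n + 1) := fun n => (hebc 0).1.trans_lt (he n.succ_pos)
  obtain ⟨f, hf, hfde⟩ := exists_int_strictMono_of_forall_lt (d := fun m => d (m + 1))
    (e := fun n => e (n + 1)) (fun _ _ h => hd (by omega)) (fun _ _ h => he (by omega))
    fun m n => (hd_lt_b m).trans (hb_lt_e n)
  refine ⟨f, hf, fun k => ?_⟩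
  rcases hfde k with ⟨m, hm⟩ | ⟨n, hn⟩
  · rw [← hm]
    exact ⟨(hdab (m + 2)).1.trans_lt (hd (by omega)),
      ((hd_lt_b m).trans (hb_lt_e 0)).trans_le (hebc 1).2⟩
  · rw [← hn]
    exact ⟨((hdab 1).1.trans_lt (hd_lt_b 0)).trans (hb_lt_e n),
      (he (by omega)).trans_le (hebc (n + 2)).2⟩

theorem nonempty_lex_orderEmbedding {α β : Type*} [LinearOrder α] [LinearOrder β]
    (f : α → β → X) (hrow : ∀ a, StrictMono (f a))
    (hsep : ∀ a a', a < a' → ∀ b b', f a b < f a' b') : Nonempty (α ×ₗ β ↪o X) :=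
  ⟨.ofStrictMono (fun p => f (ofLex p).1 (ofLex p).2) fun p q hpq => by
    rcases Prod.Lex.lt_iff.mp hpq with h | ⟨h, h'⟩
    · exact hsep _ _ h _ _
    · simp only [h]
      exact hrow _ h'⟩

def HasIntChain (S : Set X) (m : ℕ) : Prop :=
  ∃ q : ℕ → X, (∀ i ≤ m, q i ∈ S) ∧ ∀ i < m, HasIntCopy (q i) (q (i + 1))

def IsIntRich (S : Set X) : Prop :=
  S.OrdConnected ∧ ∀ m, HasIntChain S m

theorem hasIntChain_inter_Ici_or_Iic {S : Set X} (h : ∀ m, HasIntChain S m) (z : X) :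
    (∀ m, HasIntChain (S ∩ Ici z) m) ∨ ∀ m, HasIntChain (S ∩ Iic z) m := by
  by_contra! ⟨⟨m₁, hm₁⟩, m₂, hm₂⟩
  obtain ⟨q, hqS, hq⟩ := h (m₂ + m₁)
  have hqmono : StrictMonoOn q (Iic (m₂ + m₁)) :=
    strictMonoOn_Iic_of_lt_succ fun i hi => by simpa using (hq i hi).lt
  rcases le_total z (q m₂) with hz | hz
  · refine hm₁ ⟨fun i => q (m₂ + i), fun i hi => ⟨hqS _ (by omega), hz.trans ?_⟩,
      fun i hi => hq _ (by omega)⟩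
    exact hqmono.monotoneOn (by simp) (by simp; omega) (by omega)
  · refine hm₂ ⟨q, fun i hi => ⟨hqS _ (by omega), le_trans ?_ hz⟩, fun i hi => hq _ (by omega)⟩
    exact hqmono.monotoneOn (by simp; omega) (by simp) hi

theorem IsIntRich.exists_intCopy {S : Set X} (hS : IsIntRich S) :
    ∃ (f : ℤ → X) (T : Set X), StrictMono f ∧ (∀ k, f k ∈ S) ∧ T ⊆ S ∧ IsIntRich T ∧
      ((∀ k, ∀ t ∈ T, f k < t) ∨ ∀ k, ∀ t ∈ T, t < f k) := by
  obtain ⟨q, hqS, hq⟩ := hS.2 2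
  have hsub : ∀ i < 2, Ioo (q i) (q (i + 1)) ⊆ S := fun i hi =>
    Ioo_subset_Icc_self.trans (hS.1.out (hqS i (by omega)) (hqS (i + 1) (by omega)))
  rcases hasIntChain_inter_Ici_or_Iic hS.2 (q 1) with hbig | hbig
  · obtain ⟨f, hf, hfq⟩ := hq 0 (by omega)
    exact ⟨f, S ∩ Ici (q 1), hf, fun k => hsub 0 (by omega) (hfq k), inter_subset_left,
      ⟨hS.1.inter ordConnected_Ici, hbig⟩, Or.inl fun k t ht => (hfq k).2.trans_le ht.2⟩
  · obtain ⟨f, hf, hfq⟩ := hq 1 (by omega)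
    exact ⟨f, S ∩ Iic (q 1), hf, fun k => hsub 1 (by omega) (hfq k), inter_subset_left,
      ⟨hS.1.inter ordConnected_Iic, hbig⟩, Or.inr fun k t ht => ht.2.trans_lt (hfq k).1⟩

open Filter in
theorem exists_not_hasIntChain (hω : IsEmpty (ℕ ×ₗ ℤ ↪o X))
    (hω' : IsEmpty (ℕᵒᵈ ×ₗ ℤ ↪o X)) : ∃ N, ¬ HasIntChain (univ : Set X) N := by
  by_contra! hbig
  have : Nonempty X := ⟨(hbig 0).choose 0⟩
  choose! F T hF hFS hTS hT hside using fun (S : Set X) (hS : IsIntRich S) => hS.exists_intCopy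
  set s : ℕ → Set X := fun n => T^[n] univ
  have hs_succ : ∀ n, s (n + 1) = T (s n) := fun n => Function.iterate_succ_apply' ..
  have hs : ∀ n, IsIntRich (s n) := by
    intro n
    induction n with
    | zero => exact ⟨ordConnected_univ, hbig⟩
    | succ n ih => exact hs_succ n ▸ hT _ ih
  have hs_anti : Antitone s := antitone_nat_of_succ_le fun n => hs_succ n ▸ hTS _ (hs n)
  have hmem : ∀ i j, i < j → ∀ k, F (s j) k ∈ T (s i) := fun i j hij k =>
    hs_succ i ▸ hs_anti hij (hFS _ (hs j) k)
  rcases frequently_or_distrib.mp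
    (Frequently.of_forall (f := atTop) fun n => em (∀ k, ∀ t ∈ T (s n), F (s n) k < t)) with h | h
  · obtain ⟨φ, hφ, hup⟩ := extraction_of_frequently_atTop h
    exact hω.false (nonempty_lex_orderEmbedding (fun m => F (s (φ m))) (fun _ => hF _ (hs _))
      fun _ _ hm _ k' => hup _ _ _ (hmem _ _ (hφ hm) k')).some
  · obtain ⟨φ, hφ, hdown⟩ := extraction_of_frequently_atTop h
    exact hω'.false (nonempty_lex_orderEmbedding (α := ℕᵒᵈ) (fun m => F (s (φ m.ofDual)))
      (fun _ => hF _ (hs _)) fun _ _ hm k _ =>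
        (hside _ (hs _)).resolve_left (hdown _) _ _ (hmem _ _ (hφ hm) k)).some

theorem exists_monotone_fin_of_forall_not_chain {α : Type*} [Preorder α] {r : α → α → Prop}
    (hr : ∀ {x y z}, r x y → y ≤ z → r x z) {N : ℕ}
    (hN : ∀ q : ℕ → α, ¬ ∀ i < N, r (q i) (q (i + 1))) :
    ∃ φ : α → Fin N, Monotone φ ∧ ∀ x y, r x y → φ x < φ y := by
  classical
  set P : α → ℕ → Prop := fun x m => ∃ q : ℕ → α, q m = x ∧ ∀ i < m, r (q i) (q (i + 1))
  have hPN : ∀ x m, P x m → m < N := fun x m ⟨q, _, hq⟩ => by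
    by_contra! h
    exact hN q fun i hi => hq i (hi.trans_le h)
  have hP_of_le : ∀ x y m, x ≤ y → P x m → P y m := by
    rintro x y m hxy ⟨q, rfl, hq⟩
    refine ⟨Function.update q m y, by simp, fun i hi => ?_⟩
    rw [Function.update_of_ne hi.ne, Function.update_apply]
    split_ifs with h
    · exact hr (hq i hi) (h ▸ hxy)
    · exact hq i hi
  have hP_of_rel : ∀ x y m, r x y → P x m → P y (m + 1) := by
    rintro x y m hxy ⟨q, rfl, hq⟩
    refine ⟨Function.update q (m + 1) y, by simp, fun i hi => ?_⟩
    rw [Function.update_of_ne hi.ne, Function.update_apply]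
    split_ifs with h
    · exact (Nat.succ_injective h) ▸ hxy
    · exact hq i (by omega)
  let height x := Nat.findGreatest (P x) N
  have hP_height : ∀ x, P x (height x) := fun x =>
    Nat.findGreatest_spec (m := 0) N.zero_le ⟨fun _ => x, rfl, by simp⟩
  have hle_height : ∀ x m, P x m → m ≤ height x := fun x m hm =>
    Nat.le_findGreatest (hPN x m hm).le hm
  exact ⟨fun x => ⟨height x, hPN x _ (hP_height x)⟩,
    fun x y hxy => Fin.mk_le_mk.mpr (hle_height y _ (hP_of_le x y _ hxy (hP_height x))),
    fun x y hxy => Fin.mk_lt_mk.mpr (hle_height y _ (hP_of_rel x y _ hxy (hP_height x)))⟩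

variable {n : ℕ} {I : Fin n → Set X}

theorem ordConnected_of_forall_lt (hcov : ∀ x, ∃ j, x ∈ I j)
    (hord : ∀ j k, j < k → ∀ x ∈ I j, ∀ y ∈ I k, x < y) (j : Fin n) : (I j).OrdConnected :=
  ⟨fun x hx z hz y ⟨hxy, hyz⟩ => by
    obtain ⟨k, hk⟩ := hcov y
    rcases lt_trichotomy k j with h | rfl | h
    · exact absurd (hord k j h y hk x hx) hxy.not_gt
    · exact hk
    · exact absurd (hord j k h z hz y hk) hyz.not_gt⟩

theorem isEmpty_lex_int_orderEmbedding {α : Type*} [LinearOrder α] [Infinite α]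
    (hcov : ∀ x, ∃ j, x ∈ I j) (hord : ∀ j k, j < k → ∀ x ∈ I j, ∀ y ∈ I k, x < y)
    (hsur : ∀ j, IsSurordinal (I j) ∨ IsSurordinal (I j)ᵒᵈ) : IsEmpty (α ×ₗ ℤ ↪o X) := by
  refine ⟨fun f => ?_⟩
  have hconn := ordConnected_of_forall_lt hcov hord
  choose idx hidx using hcov
  obtain ⟨a, c, hne, heq⟩ := Finite.exists_ne_map_eq_of_infinite fun a => idx (f (toLex (a, 0)))
  wlog hac : a < c generalizing a c
  · exact this c a hne.symm heq.symm (hne.lt_or_gt.resolve_left hac)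
  have hle : ∀ {p q : α × ℤ}, p.1 < q.1 ∨ p.1 = q.1 ∧ p.2 ≤ q.2 → f (toLex p) ≤ f (toLex q) :=
    fun h => f.le_iff_le.mpr (Prod.Lex.toLex_le_toLex.mpr h)
  have hlt : ∀ {p q : α × ℤ}, p.1 = q.1 → p.2 < q.2 → f (toLex p) < f (toLex q) :=
    fun h h' => f.lt_iff_lt.mpr (Prod.Lex.toLex_lt_toLex.mpr (Or.inr ⟨h, h'⟩))
  refine (hconn _).isSurordinal_or_orderDual_iff.mp (hsur _)
    (f (toLex (a, 0))) (hidx _) (f (toLex (c, 0))) (heq ▸ hidx _)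
    ⟨⟨fun m => f (toLex (c, -m)), fun _ _ h => hlt rfl (by simpa using h), fun m => ⟨?_, ?_⟩⟩,
      fun m => f (toLex (a, m)), fun _ _ h => hlt rfl (by simpa using h), fun m => ⟨?_, ?_⟩⟩
  · exact hle (Or.inl hac)
  · exact hle (Or.inr ⟨rfl, by simp⟩)
  · exact hle (Or.inr ⟨rfl, by simp⟩)
  · exact hle (Or.inl hac)

end

theorem no_zeta_omega_iff_finite_sum_of_surordinals
    {C : Type u} [LinearOrder C] :
    (IsEmpty ((ℕ ×ₗ ℤ) ↪o C) ∧ IsEmpty ((ℕᵒᵈ ×ₗ ℤ) ↪o C)) ↔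
      ∃ (n : ℕ) (I : Fin n → Set C),
        (∀ x : C, ∃ j, x ∈ I j) ∧
        (∀ j k : Fin n, j < k → ∀ x ∈ I j, ∀ y ∈ I k, x < y) ∧
        (∀ j, IsSurordinal ↥(I j) ∨ IsSurordinal (↥(I j))ᵒᵈ) := by
  constructor
  · rintro ⟨hω, hω'⟩
    obtain ⟨N, hN⟩ := exists_not_hasIntChain hω hω'
    have hchain : ∀ q : ℕ → C, ¬ ∀ i < 2 * N, HasBothSeqs (q i) (q (i + 1)) := fun q hq =>
      hN ⟨fun i => q (2 * i), fun _ _ => trivial, fun i hi =>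
        (hq _ (by omega)).hasIntCopy (hq (2 * i + 1) (by omega))⟩
    obtain ⟨φ, hφ, hφlt⟩ :=
      exists_monotone_fin_of_forall_not_chain (r := HasBothSeqs) HasBothSeqs.mono_right hchain
    refine ⟨_, fun j => φ ⁻¹' {j}, fun x => ⟨φ x, rfl⟩,
      fun j k hjk x hx y hy => hφ.reflect_lt (by rwa [hx, hy]), fun j => ?_⟩
    exact (ordConnected_singleton.preimage_mono hφ).isSurordinal_or_orderDual_iff.mpr
      fun a ha b hb hab => (hφlt a b hab).ne (ha.trans hb.symm)
  · rintro ⟨n, I, hcov, hord, hsur⟩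
    exact ⟨isEmpty_lex_int_orderEmbedding hcov hord hsur,
      isEmpty_lex_int_orderEmbedding hcov hord hsur⟩
end

section
/- Let C be a chain such that C embeds into every one of its nonempty final segments (for every x ∈ C, there is an order embedding of C into {y ∈ C : x ≤ y} with the induced order). If C is not well-ordered, then sib(C) ≥ ℵ₀. -/
/-!
Fix a strictly decreasing sequence `x` in `C` and let `D` be the set of points `d` such that
some strictly decreasing sequence lies in `[x 0, d)`. Then `D` is nonempty (because `C` embeds
into `[x 0, ∞)`), upward closed, and below each of its points it has infinitely many points of
its own. Hence `C` embeds into each `Tₙ = {x 1, …, x n} ∪ D`, and the points of `Tₙ` with only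
finitely many predecessors are exactly `x 1, …, x n`. Their number is an order-isomorphism
invariant, so the `Tₙ` are pairwise non-isomorphic.
-/

universe u v

open Set

theorem exists_strictAnti_of_not_wellFoundedLT {α : Type*} [Preorder α]
    (h : ¬ WellFoundedLT α) : ∃ f : ℕ → α, StrictAnti f := by
  have hwf : ¬ WellFounded ((· < ·) : α → α → Prop) := fun hwf => h ⟨hwf⟩
  rw [wellFounded_iff_isEmpty_descending_chain, not_isEmpty_iff] at hwf
  obtain ⟨⟨f, hf⟩⟩ := hwf
  exact ⟨f, strictAnti_nat_of_succ_lt hf⟩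

section AboveDescSeq

variable {α : Type*} [Preorder α] {a d : α}

def aboveDescSeq (a : α) : Set α :=
  {d | ∃ g : ℕ → α, StrictAnti g ∧ ∀ k, g k ∈ Ico a d}

theorem isUpperSet_aboveDescSeq (a : α) : IsUpperSet (aboveDescSeq a) := by
  rintro d d' hdd' ⟨g, hg, hgd⟩
  exact ⟨g, hg, fun k => ⟨(hgd k).1, (hgd k).2.trans_le hdd'⟩⟩

theorem StrictAnti.mem_aboveDescSeq {g : ℕ → α} (hg : StrictAnti g) (ha : ∀ k, a ≤ g k)
    (k : ℕ) : g k ∈ aboveDescSeq a :=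
  ⟨fun j => g (k + 1 + j), hg.comp_strictMono fun _ _ h => by omega,
    fun j => ⟨ha _, hg (by omega)⟩⟩

theorem aboveDescSeq_subset_Ioi (a : α) : aboveDescSeq a ⊆ Ioi a := by
  rintro d ⟨g, -, hgd⟩
  exact (hgd 0).1.trans_lt (hgd 0).2

theorem infinite_aboveDescSeq_inter_Iio (hd : d ∈ aboveDescSeq a) :
    (aboveDescSeq a ∩ Iio d).Infinite := by
  obtain ⟨g, hg, hgd⟩ := hd
  refine infinite_of_injective_forall_mem hg.injective fun k => ⟨?_, (hgd k).2⟩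
  exact hg.mem_aboveDescSeq (fun j => (hgd j).1) k

theorem aboveDescSeq_nonempty (hα : ¬ WellFoundedLT α) (e : α ↪o Ici a) :
    (aboveDescSeq a).Nonempty := by
  obtain ⟨f, hf⟩ := exists_strictAnti_of_not_wellFoundedLT hα
  have hg : StrictAnti fun k => (e (f k) : α) := fun _ _ h => e.strictMono (hf h)
  exact ⟨_, hg.mem_aboveDescSeq (fun k => (e (f k)).2) 0⟩

end AboveDescSeq

section FiniteIio

variable {α β : Type*} [Preorder α] [Preorder β]

theorem OrderIso.ncard_setOf_finite_Iio (e : α ≃o β) :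
    {a : α | (Iio a).Finite}.ncard = {b : β | (Iio b).Finite}.ncard := by
  have hpre : {a : α | (Iio a).Finite} = e ⁻¹' {b : β | (Iio b).Finite} := by
    ext a
    rw [mem_preimage, mem_ofPred, mem_ofPred, ← e.image_Iio, finite_image_iff e.injective.injOn]
  rw [hpre, ncard_preimage_of_injective_subset_range e.injective (by simp)]

theorem finite_Iio_subtype_iff {s : Set α} (a : s) :
    (Iio a).Finite ↔ (s ∩ Iio (a : α)).Finite := by
  rw [← finite_image_iff Subtype.val_injective.injOn]
  congr!
  ext x
  exact ⟨fun ⟨⟨x, hx⟩, hxa, hx'⟩ => hx' ▸ ⟨hx, hxa⟩, fun ⟨hx, hxa⟩ => ⟨⟨x, hx⟩, hxa, rfl⟩⟩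

theorem ncard_setOf_finite_Iio_union {A D : Set α} (hA : A.Finite)
    (hAD : ∀ a ∈ A, ∀ d ∈ D, a < d) (hD : ∀ d ∈ D, (D ∩ Iio d).Infinite) :
    {s : ↥(A ∪ D) | (Iio s).Finite}.ncard = A.ncard := by
  have hset : {s : ↥(A ∪ D) | (Iio s).Finite} = Subtype.val ⁻¹' A := by
    ext s
    rw [mem_ofPred, finite_Iio_subtype_iff, mem_preimage]
    constructor
    · intro hfin
      refine s.2.resolve_right fun hsD => hD s hsD (hfin.subset ?_)
      exact inter_subset_inter_left _ subset_union_right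
    · intro hsA
      refine hA.subset fun t ⟨htAD, hts⟩ => htAD.resolve_right fun htD => ?_
      exact lt_asymm hts (hAD s hsA t htD)
  rw [hset, ncard_preimage_of_injective_subset_range Subtype.val_injective
    (Subtype.range_coe.symm ▸ subset_union_left)]

end FiniteIio

theorem aleph0_le_sib_of_injective {C : Type u} [LinearOrder C] (T : ℕ → Set C)
    (hT : ∀ n, Nonempty (C ↪o T n)) (hinj : ∀ n m, Nonempty (T n ≃o T m) → n = m) :
    Cardinal.aleph0 ≤ sib C := by
  let r (S S' : {S : Set C // Nonempty (C ↪o S)}) : Prop := Nonempty (S.1 ≃o S'.1)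
  have hr : Equivalence r := ⟨fun _ => ⟨.refl _⟩, fun ⟨e⟩ => ⟨e.symm⟩, fun ⟨e⟩ ⟨e'⟩ => ⟨e.trans e'⟩⟩
  let ψ (n : ℕ) : Quot r := Quot.mk r ⟨T n, hT n⟩
  have hψ : Function.Injective ψ := fun n m hnm =>
    hinj n m (hr.eqvGen_iff.mp (Quot.eqvGen_exact hnm))
  exact Cardinal.aleph0_le_mk_iff.mpr (Infinite.of_injective ψ hψ)

theorem aleph0_le_sib_of_embeds_in_final_segments
    {C : Type u} [LinearOrder C]
    (h : ∀ x : C, Nonempty (C ↪o ↥{y : C | x ≤ y}))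
    (hwo : ¬ WellFoundedLT C) :
    Cardinal.aleph0 ≤ sib C := by
  obtain ⟨x, hx⟩ := exists_strictAnti_of_not_wellFoundedLT hwo
  obtain ⟨d, hd⟩ := aboveDescSeq_nonempty hwo (h (x 0)).some
  let T (n : ℕ) : Set C := x '' Icc 1 n ∪ aboveDescSeq (x 0)
  have hT (n : ℕ) : {s : T n | (Iio s).Finite}.ncard = n := by
    have hxD : ∀ a ∈ x '' Icc 1 n, ∀ d ∈ aboveDescSeq (x 0), a < d := by
      rintro _ ⟨i, hi, rfl⟩ d hd
      exact (hx hi.1).trans (aboveDescSeq_subset_Ioi _ hd)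
    rw [ncard_setOf_finite_Iio_union ((finite_Icc 1 n).image x) hxD
        fun _ => infinite_aboveDescSeq_inter_Iio,
      ncard_image_of_injective _ hx.injective, ncard_Icc_nat, Nat.add_sub_cancel]
  have hDT (n : ℕ) : Ici d ⊆ T n := fun _ hy => Or.inr (isUpperSet_aboveDescSeq _ hy hd)
  refine aleph0_le_sib_of_injective T
    (fun n => ⟨(h d).some.trans (Subrel.inclusionEmbedding (· ≤ ·) (hDT n))⟩)
    fun n m ⟨e⟩ => ?_
  rw [← hT n, ← hT m, e.ncard_setOf_finite_Iio]
end
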